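/- arXiv:2507.20450 — 6 statements merged into one kernel-verified Lean document; each statement's English description precedes it below -/
import Mathlib

section
/- Assume lim_{s→∞} f'(s)F(s) = q with q > 1. Then lim_{s→∞} f(s)F(s)/s = q − 1 (equivalently, = 1/(p−1) where p := q/(q−1) is the Hölder conjugate of q). -/
/-!
Since `F' = -1/f`, the product `g = f F` has `g' = f' F - 1`, which tends to `q - 1`.
By the mean value theorem a function whose derivative tends to `L` at infinity grows like
`L s`, so `g s / s → q - 1`.
-/

open Filter MeasureTheory Set Asymptotics Topology

theorem isLittleO_id_atTop_of_tendsto_deriv_zero {E : Type*} [NormedAddCommGroup E]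
    [NormedSpace ℝ E] {h h' : ℝ → E} (hderiv : ∀ᶠ x in atTop, HasDerivAt h (h' x) x)
    (hlim : Tendsto h' atTop (𝓝 0)) : h =o[atTop] id := by
  rw [isLittleO_iff]
  intro ε hε
  have hε2 : 0 < ε / 2 := half_pos hε
  obtain ⟨B, hB⟩ := eventually_atTop.1 <| (hderiv.and <|
    hlim.eventually (Metric.closedBall_mem_nhds 0 hε2)).and (eventually_ge_atTop 0)
  have hB0 : 0 ≤ B := (hB B le_rfl).2
  filter_upwards [(isLittleO_const_id_atTop (h B)).def hε2, eventually_ge_atTop B]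
    with s hconst hsB
  have hmvt : ‖h s - h B‖ ≤ ε / 2 * ‖s - B‖ :=
    (convex_Icc B s).norm_image_sub_le_of_norm_hasDerivWithin_le
      (fun x hx => (hB x hx.1).1.1.hasDerivWithinAt)
      (fun x hx => mem_closedBall_zero_iff.1 (hB x hx.1).1.2)
      (left_mem_Icc.2 hsB) (right_mem_Icc.2 hsB)
  have hsub : ‖s - B‖ ≤ ‖s‖ := by
    rw [Real.norm_eq_abs, Real.norm_eq_abs, abs_of_nonneg (sub_nonneg.2 hsB),
      abs_of_nonneg (hB0.trans hsB)]
    linarith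
  calc ‖h s‖ ≤ ‖h s - h B‖ + ‖h B‖ := norm_le_norm_sub_add _ _
    _ ≤ ε / 2 * ‖s‖ + ε / 2 * ‖s‖ := by
        gcongr
        · exact hmvt.trans (by gcongr)
        · simpa only [id] using hconst
    _ = ε * ‖id s‖ := by rw [id]; ring

theorem tendsto_div_atTop_of_tendsto_deriv {g g' : ℝ → ℝ} {L : ℝ}
    (hderiv : ∀ᶠ x in atTop, HasDerivAt g (g' x) x) (hlim : Tendsto g' atTop (𝓝 L)) :
    Tendsto (fun s => g s / s) atTop (𝓝 L) := by
  have ho : (fun x => g x - L * x) =o[atTop] id :=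
    isLittleO_id_atTop_of_tendsto_deriv_zero (h' := fun x => g' x - L)
      (hderiv.mono fun x hx => by
        simpa only [mul_one] using hx.fun_sub ((hasDerivAt_id' x).const_mul L))
      (by simpa using hlim.sub_const L)
  rw [← zero_add L]
  refine (ho.tendsto_div_nhds_zero.add_const L).congr' ?_
  filter_upwards [eventually_ne_atTop 0] with s hs
  simp only [id]
  field_simp
  ring

theorem hasDerivAt_integral_Ioi {E : Type*} [NormedAddCommGroup E] [NormedSpace ℝ E]
    [CompleteSpace E] {f : ℝ → E} {a b : ℝ} (hf : IntegrableOn f (Ioi a)) (hab : a < b)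
    (hcont : ContinuousAt f b) :
    HasDerivAt (fun x => ∫ t in Ioi x, f t) (-f b) b := by
  have hint : IntervalIntegrable f volume a b :=
    (intervalIntegrable_iff_integrableOn_Ioc_of_le hab.le).2 (hf.mono_set Ioc_subset_Ioi_self)
  have hmeas : StronglyMeasurableAtFilter f (𝓝 b) volume :=
    ⟨Ioi a, Ioi_mem_nhds hab, hf.aestronglyMeasurable⟩
  refine ((intervalIntegral.integral_hasDerivAt_right hint hmeas hcont).const_sub
    (∫ t in Ioi a, f t)).congr_of_eventuallyEq ?_
  filter_upwards [Ioi_mem_nhds hab] with x hx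
  rw [← intervalIntegral.integral_Ioi_sub_Ioi hf (le_of_lt hx), sub_sub_cancel]

theorem fF_over_s_tendsto_general (f F : ℝ → ℝ) (q : ℝ)
    (hf : ContDiffOn ℝ 2 f (Set.Ioi 0))
    (hfpos : ∀ s : ℝ, 0 < s → 0 < f s)
    (hfint : ∀ s : ℝ, 0 < s →
      MeasureTheory.IntegrableOn (fun t => (f t)⁻¹) (Set.Ioi s))
    (hF : ∀ s : ℝ, F s = ∫ t in Set.Ioi s, (f t)⁻¹)
    (hlim : Filter.Tendsto (fun s => deriv f s * F s) Filter.atTop (nhds q)) :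
    Filter.Tendsto (fun s => f s * F s / s) Filter.atTop (nhds (q - 1)) := by
  have hinv : ContinuousOn (fun t => (f t)⁻¹) (Ioi 0) :=
    hf.continuousOn.inv₀ fun s hs => (hfpos s hs).ne'
  have hFderiv : ∀ s, 0 < s → HasDerivAt F (-(f s)⁻¹) s := by
    intro s hs
    rw [show F = fun x => ∫ t in Ioi x, (f t)⁻¹ from funext hF]
    exact hasDerivAt_integral_Ioi (hfint (s / 2) (half_pos hs)) (half_lt_self hs)
      (hinv.continuousAt (Ioi_mem_nhds hs))
  have hfF : ∀ s, 0 < s → HasDerivAt (fun x => f x * F x) (deriv f s * F s - 1) s := by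
    intro s hs
    have hdf : HasDerivAt f (deriv f s) s :=
      ((hf.differentiableOn (by norm_num)).differentiableAt (Ioi_mem_nhds hs)).hasDerivAt
    have hprod := hdf.mul (hFderiv s hs)
    rwa [mul_neg, mul_inv_cancel₀ (hfpos s hs).ne', ← sub_eq_add_neg] at hprod
  exact tendsto_div_atTop_of_tendsto_deriv ((eventually_gt_atTop 0).mono hfF)
    (hlim.sub_const 1)

/-- If `f'(s)·F(s) → q` as `s → ∞` with `q > 1`, where
`F(s) = ∫_s^∞ dt/f(t)`, then `f(s)·F(s)/s → q − 1` as `s → ∞`. -/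
theorem fF_over_s_tendsto (f F : ℝ → ℝ) (q : ℝ) (hq : 1 < q)
    (hf : ContDiffOn ℝ 2 f (Set.Ioi 0))
    (hfpos : ∀ s : ℝ, 0 < s → 0 < f s)
    (hf'pos : ∀ s : ℝ, 0 < s → 0 < deriv f s)
    (hfint : ∀ s : ℝ, 0 < s →
      MeasureTheory.IntegrableOn (fun t => (f t)⁻¹) (Set.Ioi s))
    (hF : ∀ s : ℝ, F s = ∫ t in Set.Ioi s, (f t)⁻¹)
    (hlim : Filter.Tendsto (fun s => deriv f s * F s) Filter.atTop (nhds q)) :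
    Filter.Tendsto (fun s => f s * F s / s) Filter.atTop (nhds (q - 1)) :=
  fF_over_s_tendsto_general f F q hf hfpos hfint hF hlim
end

section
/- Assume lim_{s→∞} f'(s)F(s) = q with q > 1. Then lim_{ρ→∞} φ'(ρ)/φ(ρ) = 2(q−1) (equivalently, = 2/(p−1) where p := q/(q−1)). -/
/-!
Set `F(s) = ∫_s^∞ dt/f(t)`, so that `F' = -1/f` and `(f F)' = f' F - 1 → q - 1`.
An L'Hôpital argument at infinity then gives `f(s) F(s) / s → q - 1`, and composing with
`φ → ∞` yields `2 f(φ) F(φ) / φ → 2 (q - 1)`.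
-/

open Filter Set MeasureTheory Asymptotics Topology

variable {E : Type*} [NormedAddCommGroup E] [NormedSpace ℝ E]

theorem isLittleO_id_of_hasDerivAt_tendsto_zero {h h' : ℝ → E}
    (hh : ∀ᶠ s in atTop, HasDerivAt h (h' s) s) (hh' : Tendsto h' atTop (𝓝 0)) :
    h =o[atTop] id := by
  refine isLittleO_iff.2 fun c hc => ?_
  have hsmall : ∀ᶠ s in atTop, ‖h' s‖ ≤ c / 2 :=
    (hh'.norm.eventually_lt_const (by simpa using half_pos hc)).mono fun _ => le_of_lt
  obtain ⟨b, hb⟩ := eventually_atTop.1 (hh.and hsmall)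
  have hmvt : ∀ s, b ≤ s → ‖h s - h b‖ ≤ c / 2 * (s - b) := fun s hs => by
    simpa [Real.norm_of_nonneg (sub_nonneg.2 hs)] using
      (convex_Ici b).norm_image_sub_le_of_norm_hasDerivWithin_le
        (fun x hx => (hb x hx).1.hasDerivWithinAt) (fun x hx => (hb x hx).2) self_mem_Ici hs
  filter_upwards [eventually_ge_atTop b, eventually_ge_atTop 0,
    (tendsto_id.const_mul_atTop (half_pos hc)).eventually_ge_atTop (‖h b‖ - c / 2 * b)]
    with s hsb hs0 hlarge
  rw [id_eq] at hlarge
  calc ‖h s‖ ≤ ‖h b‖ + ‖h s - h b‖ := norm_le_norm_add_norm_sub' _ _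
    _ ≤ c * ‖id s‖ := by
      rw [id, Real.norm_of_nonneg hs0]
      linarith [hmvt s hsb]

theorem tendsto_div_of_hasDerivAt_tendsto {g g' : ℝ → ℝ} {L : ℝ}
    (hg : ∀ᶠ s in atTop, HasDerivAt g (g' s) s) (hg' : Tendsto g' atTop (𝓝 L)) :
    Tendsto (fun s => g s / s) atTop (𝓝 L) := by
  have hlo : (fun s => g s - L * s) =o[atTop] id :=
    isLittleO_id_of_hasDerivAt_tendsto_zero (h' := fun s => g' s - L)
      (hg.mono fun s hs => (hs.sub ((hasDerivAt_id' s).const_mul L)).congr_deriv (by ring))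
      (by simpa using hg'.sub_const L)
  have hdiv := hlo.tendsto_div_nhds_zero.add_const L
  rw [zero_add] at hdiv
  refine hdiv.congr' ?_
  filter_upwards [eventually_ne_atTop 0] with s hs
  simp only [id]
  field_simp
  ring

theorem hasDerivAt_integral_Ioi_s6 [CompleteSpace E] {g : ℝ → E} {a s : ℝ}
    (hg : IntegrableOn g (Ioi a)) (has : a < s) (hgs : ContinuousAt g s) :
    HasDerivAt (fun u => ∫ t in Ioi u, g t) (-g s) s := by
  have hint : IntervalIntegrable g volume a s :=
    (intervalIntegrable_iff_integrableOn_Ioc_of_le has.le).2 (hg.mono_set Ioc_subset_Ioi_self)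
  have hderiv : HasDerivAt (fun u => (∫ t in Ioi a, g t) - ∫ t in a..u, g t) (-g s) s :=
    (intervalIntegral.integral_hasDerivAt_right hint
      (AEStronglyMeasurable.stronglyMeasurableAtFilter_of_mem hg.aestronglyMeasurable
        (Ioi_mem_nhds has)) hgs).const_sub _
  refine hderiv.congr_of_eventuallyEq ?_
  filter_upwards [Ioi_mem_nhds has] with u hu
  rw [← intervalIntegral.integral_Ioi_sub_Ioi hg hu.le, sub_sub_cancel]

theorem tendsto_mul_integral_Ioi_inv_div {f : ℝ → ℝ} {q : ℝ}
    (hf : DifferentiableOn ℝ f (Ioi 0)) (hf0 : ∀ s, 0 < s → f s ≠ 0)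
    (hfint : ∀ s, 0 < s → IntegrableOn (fun t => (f t)⁻¹) (Ioi s))
    (hlim : Tendsto (fun s => deriv f s * ∫ t in Ioi s, (f t)⁻¹) atTop (𝓝 q)) :
    Tendsto (fun s => f s * (∫ t in Ioi s, (f t)⁻¹) / s) atTop (𝓝 (q - 1)) := by
  refine tendsto_div_of_hasDerivAt_tendsto ?_ (hlim.sub_const 1)
  filter_upwards [eventually_gt_atTop 0] with s hs
  have hfs : HasDerivAt f (deriv f s) s := (hf.differentiableAt (Ioi_mem_nhds hs)).hasDerivAt
  have hF : HasDerivAt (fun u => ∫ t in Ioi u, (f t)⁻¹) (-(f s)⁻¹) s :=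
    hasDerivAt_integral_Ioi_s6 (hfint (s / 2) (half_pos hs)) (half_lt_self hs)
      (hfs.continuousAt.inv₀ (hf0 s hs))
  refine (hfs.mul hF).congr_deriv ?_
  rw [mul_neg, mul_inv_cancel₀ (hf0 s hs), sub_eq_add_neg]

theorem phi_logderiv_tendsto_general (f F : ℝ → ℝ) (q : ℝ)
    (hf : ContDiffOn ℝ 2 f (Set.Ioi 0))
    (hfpos : ∀ s : ℝ, 0 < s → 0 < f s)
    (hfint : ∀ s : ℝ, 0 < s →
      MeasureTheory.IntegrableOn (fun t => (f t)⁻¹) (Set.Ioi s))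
    (hF : ∀ s : ℝ, F s = ∫ t in Set.Ioi s, (f t)⁻¹)
    (hlim : Filter.Tendsto (fun s => deriv f s * F s) Filter.atTop (nhds q))
    (φ : ℝ → ℝ)
    (hφtop : Filter.Tendsto φ Filter.atTop Filter.atTop) :
    Filter.Tendsto (fun ρ => 2 * f (φ ρ) * F (φ ρ) / φ ρ)
      Filter.atTop (nhds (2 * (q - 1))) := by
  obtain rfl : F = fun s => ∫ t in Ioi s, (f t)⁻¹ := funext hF
  have hfF : Tendsto (fun s => f s * (∫ t in Ioi s, (f t)⁻¹) / s) atTop (𝓝 (q - 1)) :=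
    tendsto_mul_integral_Ioi_inv_div (hf.differentiableOn two_ne_zero)
      (fun s hs => (hfpos s hs).ne') hfint hlim
  refine ((hfF.comp hφtop).const_mul 2).congr fun ρ => ?_
  simp only [Function.comp_apply]
  ring

/-- If `f'(s)·F(s) → q` as `s → ∞` with `q > 1`, and
`φ : [ρ₀,∞) → (0,∞)` satisfies `φ' = 2·f(φ)·F(φ)` and `φ(ρ) → ∞`, then
`φ'(ρ)/φ(ρ) = 2·f(φ(ρ))·F(φ(ρ))/φ(ρ) → 2(q−1)` as `ρ → ∞`. -/
theorem phi_logderiv_tendsto (f F : ℝ → ℝ) (q : ℝ) (hq : 1 < q)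
    (hf : ContDiffOn ℝ 2 f (Set.Ioi 0))
    (hfpos : ∀ s : ℝ, 0 < s → 0 < f s)
    (hf'pos : ∀ s : ℝ, 0 < s → 0 < deriv f s)
    (hfint : ∀ s : ℝ, 0 < s →
      MeasureTheory.IntegrableOn (fun t => (f t)⁻¹) (Set.Ioi s))
    (hF : ∀ s : ℝ, F s = ∫ t in Set.Ioi s, (f t)⁻¹)
    (hlim : Filter.Tendsto (fun s => deriv f s * F s) Filter.atTop (nhds q))
    (ρ₀ : ℝ) (φ : ℝ → ℝ)
    (hφpos : ∀ ρ ∈ Set.Ici ρ₀, 0 < φ ρ)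
    (hφderiv : ∀ ρ ∈ Set.Ici ρ₀,
      HasDerivWithinAt φ (2 * f (φ ρ) * F (φ ρ)) (Set.Ici ρ₀) ρ)
    (hφtop : Filter.Tendsto φ Filter.atTop Filter.atTop) :
    Filter.Tendsto (fun ρ => 2 * f (φ ρ) * F (φ ρ) / φ ρ)
      Filter.atTop (nhds (2 * (q - 1))) :=
  phi_logderiv_tendsto_general f F q hf hfpos hfint hF hlim φ hφtop
end

section
/- Let λ > 0, ρ₀ ∈ ℝ, and let h : [ρ₀,∞) → [0,∞) be continuous with ∫_{ρ₀}^{∞} e^{λτ}·h(τ) dτ = ∞. Then ( ∫_{ρ₀}^{ρ} (1+(ρ−τ))·e^{−λ(ρ−τ)}·h(τ) dτ ) / ( (1+(ρ−ρ₀))·e^{−λ(ρ−ρ₀)} ) → ∞ as ρ → ∞. -/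
/-!
For `τ ≤ m(ρ) := (1 + ρ + ρ₀) / 2` the polynomial factor satisfies
`1 + (ρ - τ) ≥ (1 + (ρ - ρ₀)) / 2`, so on `[ρ₀, m(ρ)]` the kernel, divided by its value at
`τ = ρ₀`, dominates `e^{λ(τ - ρ₀)} / 2`. Dropping the nonnegative part of the integral over
`[m(ρ), ρ]`, the ratio is at least `e^{-λρ₀} / 2 · ∫_{ρ₀}^{m(ρ)} e^{λτ} h(τ) dτ`, which tends
to infinity because `m(ρ)` does.
-/

open Real Set Filter MeasureTheory

noncomputable def kernel (lam ρ τ : ℝ) : ℝ := (1 + (ρ - τ)) * exp (-lam * (ρ - τ))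

lemma kernel_pos (lam : ℝ) {ρ τ : ℝ} (hτ : τ < ρ + 1) : 0 < kernel lam ρ τ :=
  mul_pos (by linarith) (exp_pos _)

lemma continuous_kernel (lam ρ : ℝ) : Continuous (kernel lam ρ) := by
  unfold kernel; fun_prop

lemma kernel_mul_exp_le_kernel (lam : ℝ) {ρ ρ₀ τ : ℝ} (hτ : 2 * τ ≤ 1 + ρ + ρ₀) :
    kernel lam ρ ρ₀ * exp (-(lam * ρ₀)) / 2 * exp (lam * τ) ≤ kernel lam ρ τ := by
  have hexp :
      exp (-lam * (ρ - ρ₀)) * exp (-(lam * ρ₀)) * exp (lam * τ) = exp (-lam * (ρ - τ)) := by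
    rw [← exp_add, ← exp_add]; ring_nf
  calc kernel lam ρ ρ₀ * exp (-(lam * ρ₀)) / 2 * exp (lam * τ)
      = (1 + (ρ - ρ₀)) / 2 * exp (-lam * (ρ - τ)) := by
        rw [kernel, ← hexp]; ring
    _ ≤ kernel lam ρ τ := mul_le_mul_of_nonneg_right (by linarith) (exp_pos _).le

section

variable {lam ρ₀ : ℝ} {h : ℝ → ℝ}

lemma integral_kernel_mul_ge (hcont : ContinuousOn h (Ici ρ₀))
    (hnonneg : ∀ τ ∈ Ici ρ₀, 0 ≤ h τ) {ρ : ℝ} (hρ : ρ₀ + 1 ≤ ρ) :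
    kernel lam ρ ρ₀ * exp (-(lam * ρ₀)) / 2 *
        ∫ τ in ρ₀..(1 + ρ + ρ₀) / 2, exp (lam * τ) * h τ ≤
      ∫ τ in ρ₀..ρ, kernel lam ρ τ * h τ := by
  set m := (1 + ρ + ρ₀) / 2 with hm
  have hm₀ : ρ₀ ≤ m := by linarith [hm]
  have hmρ : m ≤ ρ := by linarith [hm]
  have hint : ∀ {g : ℝ → ℝ} {b}, Continuous g → ρ₀ ≤ b →
      IntervalIntegrable (fun τ => g τ * h τ) volume ρ₀ b := fun hg hb =>
    ((hg.continuousOn.mul hcont).mono (by simp [uIcc_of_le hb, Icc_subset_Ici_self])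
      ).intervalIntegrable
  rw [← intervalIntegral.integral_const_mul]
  calc ∫ τ in ρ₀..m, kernel lam ρ ρ₀ * exp (-(lam * ρ₀)) / 2 * (exp (lam * τ) * h τ)
      ≤ ∫ τ in ρ₀..m, kernel lam ρ τ * h τ := by
        refine intervalIntegral.integral_mono_on hm₀
          ((hint (by fun_prop) hm₀).const_mul _) (hint (continuous_kernel lam ρ) hm₀)
          fun τ hτ => ?_
        rw [← mul_assoc]
        exact mul_le_mul_of_nonneg_right
          (kernel_mul_exp_le_kernel lam (by linarith [hτ.2, hm])) (hnonneg τ hτ.1)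
    _ ≤ ∫ τ in ρ₀..ρ, kernel lam ρ τ * h τ := by
        refine intervalIntegral.integral_mono_interval le_rfl hm₀ hmρ ?_
          (hint (continuous_kernel lam ρ) (hm₀.trans hmρ))
        refine (ae_restrict_iff' measurableSet_Ioc).2 (Eventually.of_forall fun τ hτ => ?_)
        exact mul_nonneg (kernel_pos lam (by linarith [hτ.2])).le (hnonneg τ hτ.1.le)

end

theorem kernel_ratio_tendsto_atTop_general (lam ρ₀ : ℝ)
    (h : ℝ → ℝ)
    (hcont : ContinuousOn h (Set.Ici ρ₀))
    (hnonneg : ∀ τ ∈ Set.Ici ρ₀, 0 ≤ h τ)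
    (hdiv : Filter.Tendsto (fun ρ => ∫ τ in ρ₀..ρ, Real.exp (lam * τ) * h τ)
      Filter.atTop Filter.atTop) :
    Filter.Tendsto
      (fun ρ =>
        (∫ τ in ρ₀..ρ, (1 + (ρ - τ)) * Real.exp (-lam * (ρ - τ)) * h τ) /
          ((1 + (ρ - ρ₀)) * Real.exp (-lam * (ρ - ρ₀))))
      Filter.atTop Filter.atTop := by
  have hmid : Tendsto (fun ρ : ℝ => (1 + ρ + ρ₀) / 2) atTop atTop :=
    (tendsto_atTop_add_const_right _ _
      (tendsto_atTop_add_const_left _ _ tendsto_id)).atTop_div_const two_pos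
  have hlower := (hdiv.comp hmid).const_mul_atTop (by positivity : 0 < exp (-(lam * ρ₀)) / 2)
  refine tendsto_atTop_mono' _ ?_ hlower
  filter_upwards [eventually_ge_atTop (ρ₀ + 1)] with ρ hρ
  have hK := kernel_pos lam (ρ := ρ) (τ := ρ₀) (by linarith)
  change _ ≤ (∫ τ in ρ₀..ρ, kernel lam ρ τ * h τ) / kernel lam ρ ρ₀
  rw [le_div_iff₀ hK]
  calc _ = kernel lam ρ ρ₀ * exp (-(lam * ρ₀)) / 2 *
          ∫ τ in ρ₀..(1 + ρ + ρ₀) / 2, exp (lam * τ) * h τ := by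
        simp only [Function.comp_apply]; ring
    _ ≤ _ := integral_kernel_mul_ge hcont hnonneg hρ

/-- if `h ≥ 0` is continuous on `[ρ₀,∞)` and
`∫_{ρ₀}^{∞} e^{λτ} h(τ) dτ = ∞`, then
`(∫_{ρ₀}^{ρ} (1+(ρ−τ)) e^{−λ(ρ−τ)} h(τ) dτ) / ((1+(ρ−ρ₀)) e^{−λ(ρ−ρ₀)}) → ∞`
as `ρ → ∞`. -/
theorem kernel_ratio_tendsto_atTop (lam ρ₀ : ℝ) (hlam : 0 < lam)
    (h : ℝ → ℝ)
    (hcont : ContinuousOn h (Set.Ici ρ₀))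
    (hnonneg : ∀ τ ∈ Set.Ici ρ₀, 0 ≤ h τ)
    (hdiv : Filter.Tendsto (fun ρ => ∫ τ in ρ₀..ρ, Real.exp (lam * τ) * h τ)
      Filter.atTop Filter.atTop) :
    Filter.Tendsto
      (fun ρ =>
        (∫ τ in ρ₀..ρ, (1 + (ρ - τ)) * Real.exp (-lam * (ρ - τ)) * h τ) /
          ((1 + (ρ - ρ₀)) * Real.exp (-lam * (ρ - ρ₀))))
      Filter.atTop Filter.atTop :=
  kernel_ratio_tendsto_atTop_general lam ρ₀ h hcont hnonneg hdiv
end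

section
/- Let p > 1 and 1 < r < p. Then for every s > 1, f'(s)·F(s) = p/(p−1) + Σ_{k=1}^{∞} (−1)^{k−1} · (p−r)(1−k(p−r)) / ( (p+k(p−r)−1)(p+(k−1)(p−r)−1) ) · s^{−k(p−r)}, the series converging, where f(s) = s^p + s^r, f'(s) = p·s^{p−1} + r·s^{r−1}, and F(s) := ∫_s^∞ dt/(t^p + t^r). -/
/-!
For `t > 1`, `(t^p + t^r)⁻¹ = t^(-p) / (1 + t^(-(p-r)))` is a geometric series in `-t^(-(p-r))`.
Its terms `(-1)^k t^(-(p + k(p-r)))` are integrable on `(s, ∞)` with summable integrals, so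
integrating termwise gives `s^(p-1) F(s) = ∑ c_k y^k` with `c_k = (p - 1 + k(p-r))⁻¹` and
`y = -s^(-(p-r))`. Since `f'(s) = s^(p-1) (p - r y)`, the product `f'(s) F(s)` is the power series
with constant term `p c_0 = p/(p-1)` and coefficients `p c_{k+1} - r c_k` of `y^(k+1)`, which
simplify to the stated ones.
-/

open MeasureTheory Set Real

lemma HasSum.linear_mul_shift {R : Type*} [CommRing R] [TopologicalSpace R]
    [IsTopologicalRing R] {c : ℕ → R} {y g : R} (α β : R) (h : HasSum (fun k => c k * y ^ k) g) :
    HasSum (fun k => (α * c (k + 1) - β * c k) * y ^ (k + 1)) ((α - β * y) * g - α * c 0) := by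
  have hshift : HasSum (fun k => c (k + 1) * y ^ (k + 1)) (g - c 0) := by
    simpa using (hasSum_nat_add_iff' 1).2 h
  rw [show (α - β * y) * g - α * c 0 = α * (g - c 0) - β * y * g by ring]
  exact ((hshift.mul_left α).sub (h.mul_left (β * y))).congr_fun fun k => by ring

lemma summable_inv_add_natCast_mul_mul_pow {q a y : ℝ} (hq : 0 < q) (ha : 0 ≤ a)
    (hy : ‖y‖ < 1) : Summable (fun k : ℕ => (q + k * a)⁻¹ * y ^ k) := by
  refine .of_norm_bounded ((summable_geometric_of_lt_one (norm_nonneg y) hy).mul_left q⁻¹)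
    fun k => ?_
  have hk : 0 ≤ (k : ℝ) * a := mul_nonneg k.cast_nonneg ha
  rw [norm_mul, norm_pow, norm_inv, Real.norm_of_nonneg (by positivity)]
  gcongr
  linarith

lemma rpow_neg_add_natCast_mul {t : ℝ} (ht : 0 < t) (b a : ℝ) (k : ℕ) :
    t ^ (-(b + k * a)) = t ^ (-b) * (t ^ (-a)) ^ k := by
  rw [show -(b + k * a) = -b + -a * k by ring, rpow_add ht, rpow_mul ht.le, rpow_natCast]

lemma hasSum_inv_rpow_add_rpow {p r t : ℝ} (hrp : r < p) (ht : 1 < t) :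
    HasSum (fun k : ℕ => (-1) ^ k * t ^ (-(p + k * (p - r)))) (t ^ p + t ^ r)⁻¹ := by
  have ht0 : 0 < t := one_pos.trans ht
  have hx : ‖-t ^ (-(p - r))‖ < 1 := by
    rw [norm_neg, Real.norm_of_nonneg (rpow_nonneg ht0.le _)]
    exact rpow_lt_one_of_one_lt_of_neg ht (by linarith)
  have hfactor : (t ^ p + t ^ r)⁻¹ = t ^ (-p) * (1 - -t ^ (-(p - r)))⁻¹ := by
    rw [sub_neg_eq_add, rpow_neg ht0.le, ← mul_inv, mul_add, mul_one, ← rpow_add ht0,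
      show p + -(p - r) = r by ring]
  rw [hfactor]
  refine ((hasSum_geometric_of_norm_lt_one hx).mul_left (t ^ (-p))).congr_fun fun k => ?_
  rw [rpow_neg_add_natCast_mul ht0, neg_pow]
  ring

lemma integral_Ioi_rpow_neg_add_natCast_mul {p a s : ℝ} (hp : 1 < p) (ha : 0 ≤ a) (hs : 0 < s)
    (k : ℕ) : ∫ t in Ioi s, t ^ (-(p + k * a)) =
      s ^ (-(p - 1)) * ((p - 1 + k * a)⁻¹ * (s ^ (-a)) ^ k) := by
  have hk : 0 ≤ (k : ℝ) * a := mul_nonneg k.cast_nonneg ha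
  rw [integral_Ioi_rpow_of_lt (by linarith) hs, show -(p + k * a) + 1 = -(p - 1 + k * a) by ring,
    rpow_neg_add_natCast_mul hs, neg_div_neg_eq]
  ring

lemma hasSum_rpow_mul_integral_Ioi_inv_rpow_add_rpow {p r s : ℝ} (hp : 1 < p) (hrp : r < p)
    (hs : 1 < s) : HasSum (fun k : ℕ => (p - 1 + k * (p - r))⁻¹ * (-s ^ (-(p - r))) ^ k)
      (s ^ (p - 1) * ∫ t in Ioi s, (t ^ p + t ^ r)⁻¹) := by
  have hs0 : 0 < s := one_pos.trans hs
  have ha : 0 ≤ p - r := sub_nonneg.2 hrp.le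
  set T : ℕ → ℝ → ℝ := fun k t => (-1) ^ k * t ^ (-(p + k * (p - r)))
  have hint (k : ℕ) : Integrable (T k) (volume.restrict (Ioi s)) :=
    (integrableOn_Ioi_rpow_of_lt (by nlinarith [mul_nonneg k.cast_nonneg ha]) hs0).const_mul _
  have hnorm (k : ℕ) : ∫ t in Ioi s, ‖T k t‖ = ∫ t in Ioi s, t ^ (-(p + k * (p - r))) := by
    refine setIntegral_congr_fun measurableSet_Ioi fun t ht => ?_
    simp [T, abs_of_nonneg (rpow_nonneg (hs0.trans ht).le _)]
  have hsummable : Summable fun k => ∫ t in Ioi s, ‖T k t‖ := by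
    simp only [hnorm, integral_Ioi_rpow_neg_add_natCast_mul hp ha hs0]
    refine (summable_inv_add_natCast_mul_mul_pow (by linarith) ha ?_).mul_left _
    rw [Real.norm_of_nonneg (rpow_nonneg hs0.le _)]
    exact rpow_lt_one_of_one_lt_of_neg hs (by linarith)
  have hsum : ∫ t in Ioi s, ∑' k, T k t = ∫ t in Ioi s, (t ^ p + t ^ r)⁻¹ :=
    setIntegral_congr_fun measurableSet_Ioi fun t ht =>
      (hasSum_inv_rpow_add_rpow hrp (hs.trans ht)).tsum_eq
  have hterms := (hasSum_integral_of_summable_integral_norm hint hsummable).mul_left (s ^ (p - 1))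
  rw [hsum] at hterms
  refine hterms.congr_fun fun k => ?_
  rw [integral_const_mul, integral_Ioi_rpow_neg_add_natCast_mul hp ha hs0, neg_pow,
    rpow_neg hs0.le (p - 1)]
  field_simp

lemma sub_mul_inv_mul_pow_succ_eq {p r s : ℝ} (hp : 1 < p) (hrp : r < p) (hs : 0 < s) (k : ℕ) :
    (p * (p - 1 + ((k + 1 : ℕ) : ℝ) * (p - r))⁻¹ - r * (p - 1 + k * (p - r))⁻¹) *
        (-s ^ (-(p - r))) ^ (k + 1) =
      (-1 : ℝ) ^ k * ((p - r) * (1 - ((k : ℝ) + 1) * (p - r))) /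
        ((p + ((k : ℝ) + 1) * (p - r) - 1) * (p + (k : ℝ) * (p - r) - 1)) *
        s ^ (-(((k : ℝ) + 1) * (p - r))) := by
  have hk : 0 ≤ (k : ℝ) * (p - r) := mul_nonneg k.cast_nonneg (sub_nonneg.2 hrp.le)
  have h₁ : p + ((k : ℝ) + 1) * (p - r) - 1 ≠ 0 := by nlinarith
  have h₂ : p + (k : ℝ) * (p - r) - 1 ≠ 0 := by nlinarith
  rw [neg_pow, ← rpow_natCast (s ^ _), ← rpow_mul hs.le]
  push_cast
  rw [show -(p - r) * ((k : ℝ) + 1) = -(((k : ℝ) + 1) * (p - r)) by ring,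
    show p - 1 + ((k : ℝ) + 1) * (p - r) = p + ((k : ℝ) + 1) * (p - r) - 1 by ring,
    show p - 1 + (k : ℝ) * (p - r) = p + (k : ℝ) * (p - r) - 1 by ring]
  field_simp
  ring

theorem f'F_series_expansion_general (p r : ℝ) (hp : 1 < p) (hrp : r < p)
    (F : ℝ → ℝ)
    (hF : ∀ s : ℝ, F s = ∫ t in Set.Ioi s, (t ^ p + t ^ r)⁻¹) :
    ∀ s : ℝ, 1 < s →
      Summable (fun k : ℕ =>
        (-1 : ℝ) ^ k * ((p - r) * (1 - ((k : ℝ) + 1) * (p - r))) /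
          ((p + ((k : ℝ) + 1) * (p - r) - 1) * (p + (k : ℝ) * (p - r) - 1)) *
          s ^ (-(((k : ℝ) + 1) * (p - r)))) ∧
      (p * s ^ (p - 1) + r * s ^ (r - 1)) * F s =
        p / (p - 1) + ∑' k : ℕ,
          (-1 : ℝ) ^ k * ((p - r) * (1 - ((k : ℝ) + 1) * (p - r))) /
            ((p + ((k : ℝ) + 1) * (p - r) - 1) * (p + (k : ℝ) * (p - r) - 1)) *
            s ^ (-(((k : ℝ) + 1) * (p - r))) := by
  intro s hs
  have hs0 : 0 < s := one_pos.trans hs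
  have hseries := ((hasSum_rpow_mul_integral_Ioi_inv_rpow_add_rpow hp hrp hs).linear_mul_shift
    p r).congr_fun fun k => (sub_mul_inv_mul_pow_succ_eq hp hrp hs0 k).symm
  have hf' : p * s ^ (p - 1) + r * s ^ (r - 1) = (p - r * -s ^ (-(p - r))) * s ^ (p - 1) := by
    rw [show r - 1 = -(p - r) + (p - 1) by ring, rpow_add hs0]
    ring
  refine ⟨hseries.summable, ?_⟩
  rw [hseries.tsum_eq, hF, hf']
  simp only [CharP.cast_eq_zero, zero_mul, add_zero]
  ring

/-- for `f(s) = s^p + s^r` with `p > 1`, `1 < r < p`, and every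
`s > 1`, `f'(s)·F(s) = p/(p−1) + Σ_{k=1}^{∞} (−1)^{k−1}
(p−r)(1−k(p−r)) / ((p+k(p−r)−1)(p+(k−1)(p−r)−1)) · s^{−k(p−r)}`
(the sum below is indexed by `k ∈ ℕ` standing for `k+1 ≥ 1`), where
`f'(s) = p·s^{p−1} + r·s^{r−1}` and `F(s) = ∫_s^∞ dt/(t^p + t^r)`. -/
theorem f'F_series_expansion (p r : ℝ) (hp : 1 < p) (hr : 1 < r) (hrp : r < p)
    (F : ℝ → ℝ)
    (hF : ∀ s : ℝ, F s = ∫ t in Set.Ioi s, (t ^ p + t ^ r)⁻¹) :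
    ∀ s : ℝ, 1 < s →
      Summable (fun k : ℕ =>
        (-1 : ℝ) ^ k * ((p - r) * (1 - ((k : ℝ) + 1) * (p - r))) /
          ((p + ((k : ℝ) + 1) * (p - r) - 1) * (p + (k : ℝ) * (p - r) - 1)) *
          s ^ (-(((k : ℝ) + 1) * (p - r)))) ∧
      (p * s ^ (p - 1) + r * s ^ (r - 1)) * F s =
        p / (p - 1) + ∑' k : ℕ,
          (-1 : ℝ) ^ k * ((p - r) * (1 - ((k : ℝ) + 1) * (p - r))) /
            ((p + ((k : ℝ) + 1) * (p - r) - 1) * (p + (k : ℝ) * (p - r) - 1)) *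
            s ^ (-(((k : ℝ) + 1) * (p - r))) :=
  f'F_series_expansion_general p r hp hrp F hF
end

section
/- Let p > 1 and r ∈ ℝ, and for s > 2 set F(s) := ∫_s^∞ du/(u^p (log u)^r) (which is finite). Then, as s → ∞, F(s) − 1/((p−1)·s^{p−1}·(log s)^r) + r/((p−1)²·s^{p−1}·(log s)^{r+1}) = O( 1/(s^{p−1}·(log s)^{r+2}) ). -/
open Real MeasureTheory Set Filter Topology

/-!
Differentiating `x ↦ (x ^ a * (log x) ^ b)⁻¹` gives `-a` times the same function with exponents
`(a + 1, b)` minus `b` times the one with `(a + 1, b + 1)`. Hence the derivative of the two-term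
expansion is `-(u ^ p (log u) ^ r)⁻¹ + r (r + 1) / (p - 1) ^ 2 * (u ^ p (log u) ^ (r + 2))⁻¹`, and
integrating over `(s, ∞)` leaves as error `r (r + 1) / (p - 1) ^ 2` times the tail integral of
`(u ^ p (log u) ^ (r + 2))⁻¹`. Once `log s ≥ 2 |q| / (p - 1)`, the integrand `(u ^ p (log u) ^ q)⁻¹`
is dominated by `-2 / (p - 1)` times the derivative of `(u ^ (p - 1) (log u) ^ q)⁻¹`, so its tail
integral is at most `2 / (p - 1) * (s ^ (p - 1) (log s) ^ q)⁻¹`.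
-/

theorem hasDerivAt_inv_rpow_mul_log_rpow (a b : ℝ) {x : ℝ} (hx : 1 < x) :
    HasDerivAt (fun y => (y ^ a * log y ^ b)⁻¹)
      (-(a * (x ^ (a + 1) * log x ^ b)⁻¹ + b * (x ^ (a + 1) * log x ^ (b + 1))⁻¹)) x := by
  have hx0 : 0 < x := by linarith
  have hL : 0 < log x := log_pos hx
  have hpow : HasDerivAt (fun y => y ^ a * log y ^ b)
      (a * x ^ (a - 1) * log x ^ b + x ^ a * (x⁻¹ * b * log x ^ (b - 1))) x :=
    (hasDerivAt_rpow_const (Or.inl hx0.ne')).mul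
      ((hasDerivAt_log hx0.ne').rpow_const (Or.inl hL.ne'))
  refine (hpow.inv (by positivity)).congr_deriv ?_
  rw [rpow_add_one hx0.ne', rpow_add_one hL.ne', rpow_sub_one hx0.ne', rpow_sub_one hL.ne']
  have : 0 < x ^ a := by positivity
  have : 0 < log x ^ b := by positivity
  field_simp

theorem tendsto_inv_rpow_mul_log_rpow_atTop {a : ℝ} (ha : 0 < a) (b : ℝ) :
    Tendsto (fun x => (x ^ a * log x ^ b)⁻¹) atTop (𝓝 0) := by
  refine ((isLittleO_log_rpow_rpow_atTop (-b) ha).tendsto_div_nhds_zero).congr' ?_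
  filter_upwards [eventually_gt_atTop 1] with x hx
  rw [rpow_neg (log_pos hx).le, mul_inv, div_eq_mul_inv, mul_comm]

theorem integral_Ioi_le_of_le_neg_deriv {f ψ ψ' : ℝ → ℝ} {s : ℝ}
    (hψ : ∀ x ∈ Ici s, HasDerivAt ψ (ψ' x) x) (hψ_lim : Tendsto ψ atTop (𝓝 0))
    (hf : AEStronglyMeasurable f (volume.restrict (Ioi s)))
    (hf_nonneg : ∀ x ∈ Ioi s, 0 ≤ f x) (hf_le : ∀ x ∈ Ioi s, f x ≤ -ψ' x) :
    IntegrableOn f (Ioi s) ∧ ∫ x in Ioi s, f x ≤ ψ s := by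
  have hψ'_nonpos : ∀ x ∈ Ioi s, ψ' x ≤ 0 := fun x hx =>
    neg_nonneg.1 ((hf_nonneg x hx).trans (hf_le x hx))
  have hψ'_int := (integrableOn_Ioi_deriv_of_nonpos' hψ hψ'_nonpos hψ_lim).neg
  have hf_int : IntegrableOn f (Ioi s) := hψ'_int.mono' hf <|
    (ae_restrict_iff' measurableSet_Ioi).2 <| ae_of_all _ fun x hx => by
      rw [norm_of_nonneg (hf_nonneg x hx)]; exact hf_le x hx
  refine ⟨hf_int, ?_⟩
  calc ∫ x in Ioi s, f x ≤ ∫ x in Ioi s, -ψ' x :=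
        setIntegral_mono_on hf_int hψ'_int measurableSet_Ioi hf_le
    _ = ψ s := by
        rw [integral_neg, integral_Ioi_of_hasDerivAt_of_nonpos' hψ hψ'_nonpos hψ_lim]; ring

theorem inv_rpow_mul_log_rpow_nonneg (a b : ℝ) {x : ℝ} (hx : 1 ≤ x) :
    0 ≤ (x ^ a * log x ^ b)⁻¹ := by
  have := log_nonneg hx
  positivity

theorem eventually_integral_Ioi_inv_rpow_mul_log_rpow_le {p : ℝ} (hp : 1 < p) (q : ℝ) :
    ∀ᶠ s in atTop, IntegrableOn (fun u => (u ^ p * log u ^ q)⁻¹) (Ioi s) ∧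
      ∫ u in Ioi s, (u ^ p * log u ^ q)⁻¹ ≤ 2 / (p - 1) * (s ^ (p - 1) * log s ^ q)⁻¹ := by
  have hp1 : 0 < p - 1 := by linarith
  filter_upwards [eventually_gt_atTop 1,
    tendsto_log_atTop.eventually_ge_atTop (2 * |q| / (p - 1))] with s hs hLs
  have hcont : ContinuousOn (fun u => (u ^ p * log u ^ q)⁻¹) (Ioi s) := fun x hx =>
    (hasDerivAt_inv_rpow_mul_log_rpow p q (hs.trans hx)).continuousAt.continuousWithinAt
  refine integral_Ioi_le_of_le_neg_deriv
    (fun x hx => (hasDerivAt_inv_rpow_mul_log_rpow (p - 1) q (hs.trans_le hx)).const_mul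
      (2 / (p - 1)))
    (by simpa using (tendsto_inv_rpow_mul_log_rpow_atTop hp1 q).const_mul (2 / (p - 1)))
    (hcont.aestronglyMeasurable measurableSet_Ioi)
    (fun x hx => inv_rpow_mul_log_rpow_nonneg p q (hs.trans hx).le) ?_
  intro x hx
  have hx1 : 1 < x := hs.trans hx
  have hL : 0 < log x := log_pos hx1
  have hqL : 0 ≤ (p - 1) * log x + 2 * q := by
    have : 2 * |q| ≤ (p - 1) * log x := by
      rw [div_le_iff₀ hp1] at hLs
      nlinarith [log_le_log (by linarith) hx.le]
    linarith [neg_abs_le q]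
  have : 0 < x ^ p := by positivity
  have : 0 < log x ^ q := by positivity
  rw [sub_add_cancel, rpow_add_one hL.ne']
  set X := x ^ p
  set Y := log x ^ q
  rw [show -(2 / (p - 1) * -((p - 1) * (X * Y)⁻¹ + q * (X * (Y * log x))⁻¹))
      = (X * Y)⁻¹ + (X * Y)⁻¹ * (((p - 1) * log x + 2 * q) / ((p - 1) * log x)) by
    field_simp; ring]
  have : 0 ≤ (X * Y)⁻¹ * (((p - 1) * log x + 2 * q) / ((p - 1) * log x)) := by positivity
  linarith

theorem integral_Ioi_inv_rpow_mul_log_rpow_eq {p : ℝ} (hp : 1 < p) (r : ℝ) {s : ℝ} (hs : 1 < s)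
    (hint : IntegrableOn (fun u => (u ^ p * log u ^ r)⁻¹) (Ioi s))
    (hint₂ : IntegrableOn (fun u => (u ^ p * log u ^ (r + 2))⁻¹) (Ioi s)) :
    ∫ u in Ioi s, (u ^ p * log u ^ r)⁻¹ =
      1 / ((p - 1) * s ^ (p - 1) * log s ^ r)
        - r / ((p - 1) ^ 2 * s ^ (p - 1) * log s ^ (r + 1))
        + r * (r + 1) / (p - 1) ^ 2 * ∫ u in Ioi s, (u ^ p * log u ^ (r + 2))⁻¹ := by
  have hp1 : 0 < p - 1 := by linarith
  set K := r * (r + 1) / (p - 1) ^ 2 with hK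
  have hderiv : ∀ x ∈ Ici s, HasDerivAt
      (fun y => (p - 1)⁻¹ * (y ^ (p - 1) * log y ^ r)⁻¹
        - r / (p - 1) ^ 2 * (y ^ (p - 1) * log y ^ (r + 1))⁻¹)
      (-(x ^ p * log x ^ r)⁻¹ + K * (x ^ p * log x ^ (r + 2))⁻¹) x := by
    intro x hx
    have hx1 : 1 < x := hs.trans_le hx
    refine (((hasDerivAt_inv_rpow_mul_log_rpow (p - 1) r hx1).const_mul _).sub
      ((hasDerivAt_inv_rpow_mul_log_rpow (p - 1) (r + 1) hx1).const_mul _)).congr_deriv ?_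
    rw [sub_add_cancel, add_assoc, one_add_one_eq_two, hK]
    field_simp
    ring
  have hlim : Tendsto (fun y => (p - 1)⁻¹ * (y ^ (p - 1) * log y ^ r)⁻¹
      - r / (p - 1) ^ 2 * (y ^ (p - 1) * log y ^ (r + 1))⁻¹) atTop (𝓝 0) := by
    simpa using ((tendsto_inv_rpow_mul_log_rpow_atTop hp1 r).const_mul _).sub
      ((tendsto_inv_rpow_mul_log_rpow_atTop hp1 (r + 1)).const_mul _)
  have hneg : IntegrableOn (fun u => -(u ^ p * log u ^ r)⁻¹) (Ioi s) := hint.neg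
  have hftc := integral_Ioi_of_hasDerivAt_of_tendsto' hderiv (hneg.add (hint₂.const_mul K)) hlim
  rw [integral_add hneg (hint₂.const_mul K), integral_neg, integral_const_mul] at hftc
  rw [mul_assoc, mul_assoc, one_div, mul_inv, div_mul_eq_div_div, div_eq_mul_inv (r / _)]
  linarith

theorem F_log_expansion_general (p r : ℝ) (hp : 1 < p)
    (F : ℝ → ℝ)
    (hF : ∀ s : ℝ, 2 < s →
      F s = ∫ u in Set.Ioi s, (u ^ p * Real.log u ^ r)⁻¹) :
    ∃ C : ℝ, 0 < C ∧ ∀ᶠ s in Filter.atTop,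
      |F s - 1 / ((p - 1) * s ^ (p - 1) * Real.log s ^ r)
          + r / ((p - 1) ^ 2 * s ^ (p - 1) * Real.log s ^ (r + 1))| ≤
        C * (1 / (s ^ (p - 1) * Real.log s ^ (r + 2))) := by
  have hp1 : 0 < p - 1 := by linarith
  set K := r * (r + 1) / (p - 1) ^ 2
  refine ⟨|K| * (2 / (p - 1)) + 1, by positivity, ?_⟩
  filter_upwards [eventually_gt_atTop 2, eventually_integral_Ioi_inv_rpow_mul_log_rpow_le hp r,
    eventually_integral_Ioi_inv_rpow_mul_log_rpow_le hp (r + 2)]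
    with s hs ⟨hint, _⟩ ⟨hint₂, hle⟩
  set I := ∫ u in Ioi s, (u ^ p * log u ^ (r + 2))⁻¹
  have hI : 0 ≤ I := setIntegral_nonneg measurableSet_Ioi fun u hu =>
    inv_rpow_mul_log_rpow_nonneg p (r + 2) (by linarith [hu.out])
  have hW := inv_rpow_mul_log_rpow_nonneg (p - 1) (r + 2) (by linarith : 1 ≤ s)
  have hrem : F s - 1 / ((p - 1) * s ^ (p - 1) * log s ^ r)
      + r / ((p - 1) ^ 2 * s ^ (p - 1) * log s ^ (r + 1)) = K * I := by
    rw [hF s hs, integral_Ioi_inv_rpow_mul_log_rpow_eq hp r (by linarith) hint hint₂]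
    ring
  rw [hrem, abs_mul, abs_of_nonneg hI, one_div]
  calc |K| * I ≤ |K| * (2 / (p - 1) * (s ^ (p - 1) * log s ^ (r + 2))⁻¹) :=
        mul_le_mul_of_nonneg_left hle (abs_nonneg K)
    _ ≤ (|K| * (2 / (p - 1)) + 1) * (s ^ (p - 1) * log s ^ (r + 2))⁻¹ := by
        rw [add_mul, one_mul, mul_assoc]
        linarith

/-- for `p > 1`, `r ∈ ℝ` and `F(s) = ∫_s^∞ du/(u^p (log u)^r)`
(finite for `s > 2`), as `s → ∞`,
`F(s) − 1/((p−1) s^{p−1} (log s)^r) + r/((p−1)² s^{p−1} (log s)^{r+1})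
  = O(1/(s^{p−1} (log s)^{r+2}))`. -/
theorem F_log_expansion (p r : ℝ) (hp : 1 < p)
    (F : ℝ → ℝ)
    (hF : ∀ s : ℝ, 2 < s →
      F s = ∫ u in Set.Ioi s, (u ^ p * Real.log u ^ r)⁻¹)
    (hfin : ∀ s : ℝ, 2 < s →
      MeasureTheory.IntegrableOn (fun u => (u ^ p * Real.log u ^ r)⁻¹)
        (Set.Ioi s)) :
    ∃ C : ℝ, 0 < C ∧ ∀ᶠ s in Filter.atTop,
      |F s - 1 / ((p - 1) * s ^ (p - 1) * Real.log s ^ r)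
          + r / ((p - 1) ^ 2 * s ^ (p - 1) * Real.log s ^ (r + 1))| ≤
        C * (1 / (s ^ (p - 1) * Real.log s ^ (r + 2))) :=
  F_log_expansion_general p r hp F hF
end

section
/- Let p > 1 and 1 < r < p. The function F(s) := ∫_s^∞ dt/(t^p + t^r) is a strictly decreasing continuous bijection from (0,∞) onto (0,∞); let F⁻¹ denote its inverse. Then, as σ → 0+, F⁻¹(σ) = ((p−1)σ)^{−1/(p−1)} − (1/(2p−r−1))·((p−1)σ)^{(p−r−1)/(p−1)} + O( σ^{(2(p−r)−1)/(p−1)} ). -/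
/-!
Expanding `1 / (t^p + t^r) = t^(-p) - t^(r-2p) + O(t^(2r-3p))` and integrating gives, as `s → ∞`,
`(p - 1) F(s) = s^(1-p) w(s)` with `w(s) = 1 - (p-1)/(2p-r-1) s^(r-p) + O(s^(2(r-p)))`.
Hence `((p-1) F(s))^(-1/(p-1)) = s w^(-1/(p-1))` and
`((p-1) F(s))^((p-r-1)/(p-1)) = s^(1+r-p) w^((p-r-1)/(p-1))` can be expanded to second and
first order in `w - 1 = O(s^(r-p))`, which leaves an error
`O(s^(1+2(r-p))) = O(F(s)^((2(p-r)-1)/(p-1)))`. Substituting `s = F⁻¹(σ)`, which tends to `∞` as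
`σ → 0+`, gives the expansion of `F⁻¹`. Since `F' = -1/(s^p + s^r)`, `F` is strictly decreasing;
it tends to `0` at `∞` and, because `r > 1`, to `∞` at `0+`, so it maps `(0, ∞)` onto itself.
-/

open Real Set MeasureTheory Filter Topology Asymptotics

theorem isBigO_sub_sub_mul_sq_of_hasDerivAt {f f' : ℝ → ℝ} {x₀ : ℝ}
    (hf : ∀ᶠ x in 𝓝 x₀, HasDerivAt f (f' x) x)
    (hf' : (fun x ↦ f' x - f' x₀) =O[𝓝 x₀] fun x ↦ x - x₀) :
    (fun x ↦ f x - f x₀ - f' x₀ * (x - x₀)) =O[𝓝 x₀] fun x ↦ (x - x₀) ^ 2 := by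
  obtain ⟨c, hc₀, hc⟩ := hf'.exists_pos
  obtain ⟨δ, hδ, hball⟩ := Metric.eventually_nhds_iff_ball.1 (hf.and hc.bound)
  refine IsBigO.of_bound c (Metric.eventually_nhds_iff_ball.2 ⟨δ, hδ, fun x hx ↦ ?_⟩)
  have hseg : segment ℝ x₀ x ⊆ Metric.ball x₀ δ :=
    (convex_ball x₀ δ).segment_subset (Metric.mem_ball_self hδ) hx
  have hderiv : ∀ y ∈ segment ℝ x₀ x, HasDerivWithinAt (fun y ↦ f y - f' x₀ * y)
      (f' y - f' x₀) (segment ℝ x₀ x) y := fun y hy ↦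
    (((hball y (hseg hy)).1.sub ((hasDerivAt_id y).const_mul (f' x₀))).congr_deriv
      (by simp)).hasDerivWithinAt
  have hbound : ∀ y ∈ segment ℝ x₀ x, ‖f' y - f' x₀‖ ≤ c * ‖x - x₀‖ := fun y hy ↦
    (hball y (hseg hy)).2.trans (by gcongr; exact norm_sub_le_of_mem_segment hy)
  have := (convex_segment x₀ x).norm_image_sub_le_of_norm_hasDerivWithin_le hderiv hbound
    (left_mem_segment ℝ x₀ x) (right_mem_segment ℝ x₀ x)
  calc ‖f x - f x₀ - f' x₀ * (x - x₀)‖ = ‖f x - f' x₀ * x - (f x₀ - f' x₀ * x₀)‖ := by ring_nf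
    _ ≤ c * ‖x - x₀‖ * ‖x - x₀‖ := this
    _ = c * ‖(x - x₀) ^ 2‖ := by rw [norm_pow]; ring

theorem rpow_sub_one_isBigO (q : ℝ) : (fun w : ℝ ↦ w ^ q - 1) =O[𝓝 1] fun w ↦ w - 1 := by
  simpa using (Real.differentiableAt_rpow_const_of_ne q one_ne_zero).isBigO_sub

theorem rpow_sub_one_sub_mul_isBigO (q : ℝ) :
    (fun w : ℝ ↦ w ^ q - 1 - q * (w - 1)) =O[𝓝 1] fun w ↦ (w - 1) ^ 2 := by
  have hderiv : ∀ᶠ w in 𝓝 (1 : ℝ), HasDerivAt (· ^ q) (q * w ^ (q - 1)) w :=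
    (eventually_ne_nhds one_ne_zero).mono fun w hw ↦ Real.hasDerivAt_rpow_const (Or.inl hw)
  have hderiv' : (fun w ↦ q * w ^ (q - 1) - q * 1 ^ (q - 1)) =O[𝓝 1] fun w ↦ w - 1 :=
    ((rpow_sub_one_isBigO (q - 1)).const_mul_left q).congr_left fun w ↦ by
      rw [one_rpow]; ring
  simpa using isBigO_sub_sub_mul_sq_of_hasDerivAt hderiv hderiv'

theorem inv_add_sub_inv_sub_div_sq_mem_Icc {A B : ℝ} (hA : 0 < A) (hB : 0 ≤ B) :
    (A + B)⁻¹ - (A⁻¹ - B / A ^ 2) ∈ Icc 0 (B ^ 2 / A ^ 3) := by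
  have hAB : 0 < A + B := by linarith
  have hid : (A + B)⁻¹ - (A⁻¹ - B / A ^ 2) = B ^ 2 / (A ^ 2 * (A + B)) := by
    field_simp; ring
  rw [hid]
  exact ⟨by positivity, div_le_div_of_nonneg_left (sq_nonneg B) (by positivity)
    (by nlinarith [sq_nonneg A])⟩

theorem rpow_rpow_eq_mul_rpow_pow {s a b c : ℝ} (hs : 0 < s) (n : ℕ) (h : a * b = 1 + n * c) :
    (s ^ a) ^ b = s * (s ^ c) ^ n := by
  rw [← rpow_mul hs.le, h, rpow_add hs, rpow_one, ← rpow_mul_natCast hs.le, mul_comm c]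

section Integrand

variable {p r t s : ℝ}

theorem continuousOn_inv_rpow_add_rpow :
    ContinuousOn (fun t : ℝ ↦ (t ^ p + t ^ r)⁻¹) (Ioi 0) := by
  intro t (ht : 0 < t)
  have hcont : ContinuousAt (fun t : ℝ ↦ t ^ p + t ^ r) t := by
    fun_prop (disch := exact Or.inl ht.ne')
  exact (hcont.inv₀ (by positivity)).continuousWithinAt

theorem inv_rpow_add_rpow_pos (ht : 0 < t) : 0 < (t ^ p + t ^ r)⁻¹ := by positivity

theorem inv_rpow_add_rpow_le (ht : 0 < t) : (t ^ p + t ^ r)⁻¹ ≤ t ^ (-p) := by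
  rw [rpow_neg ht.le]
  exact inv_anti₀ (by positivity) (le_add_of_nonneg_right (by positivity))

theorem integrableOn_inv_rpow_add_rpow (hp : 1 < p) (hs : 0 < s) :
    IntegrableOn (fun t : ℝ ↦ (t ^ p + t ^ r)⁻¹) (Ioi s) := by
  refine (integrableOn_Ioi_rpow_of_lt (by linarith : -p < -1) hs).mono'
    ((continuousOn_inv_rpow_add_rpow.mono (Ioi_subset_Ioi hs.le)).aestronglyMeasurable
      measurableSet_Ioi) ?_
  filter_upwards [ae_restrict_mem measurableSet_Ioi] with t (ht : s < t)
  rw [norm_of_nonneg (inv_rpow_add_rpow_pos (hs.trans ht)).le]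
  exact inv_rpow_add_rpow_le (hs.trans ht)

theorem inv_rpow_add_rpow_sub_mem_Icc (ht : 0 < t) :
    (t ^ p + t ^ r)⁻¹ - (t ^ (-p) - t ^ (r - 2 * p)) ∈ Icc 0 (t ^ (2 * r - 3 * p)) := by
  have h2 : t ^ (r - 2 * p) = t ^ r / (t ^ p) ^ 2 := by
    rw [rpow_sub ht, ← rpow_mul_natCast ht.le]; ring_nf
  have h3 : t ^ (2 * r - 3 * p) = (t ^ r) ^ 2 / (t ^ p) ^ 3 := by
    rw [rpow_sub ht, ← rpow_mul_natCast ht.le, ← rpow_mul_natCast ht.le]; ring_nf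
  rw [rpow_neg ht.le, h2, h3]
  exact inv_add_sub_inv_sub_div_sq_mem_Icc (by positivity) (by positivity)

end Integrand

noncomputable def tailIntegral (p r s : ℝ) : ℝ := ∫ t in Ioi s, (t ^ p + t ^ r)⁻¹

section TailIntegral

variable {p r s : ℝ}

theorem tailIntegral_pos (hp : 1 < p) (hs : 0 < s) : 0 < tailIntegral p r s := by
  have hpos : ∀ t ∈ Ioi s, 0 < (t ^ p + t ^ r)⁻¹ := fun t ht ↦
    inv_rpow_add_rpow_pos (hs.trans ht)
  rw [tailIntegral, setIntegral_pos_iff_support_of_nonneg_ae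
    ((ae_restrict_iff' measurableSet_Ioi).2 (ae_of_all _ fun t ht ↦ (hpos t ht).le))
    (integrableOn_inv_rpow_add_rpow hp hs)]
  calc 0 < volume (Ioi s) := by simp
    _ ≤ _ := measure_mono fun t ht ↦ mem_inter (hpos t ht).ne' ht

theorem tailIntegral_eq_intervalIntegral_add (hp : 1 < p) (hs : 0 < s) :
    tailIntegral p r s = (∫ t in s..1, (t ^ p + t ^ r)⁻¹) + tailIntegral p r 1 :=
  (intervalIntegral.integral_interval_add_Ioi (integrableOn_inv_rpow_add_rpow hp hs)
    (integrableOn_inv_rpow_add_rpow hp one_pos)).symm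

theorem hasDerivAt_tailIntegral (hp : 1 < p) (hs : 0 < s) :
    HasDerivAt (tailIntegral p r) (-(s ^ p + s ^ r)⁻¹) s := by
  have hg := continuousOn_inv_rpow_add_rpow (p := p) (r := r)
  have hsub : uIcc s 1 ⊆ Ioi 0 := fun t ht ↦ lt_of_lt_of_le (lt_min hs one_pos) ht.1
  have hprim := intervalIntegral.integral_hasDerivAt_left (hg.mono hsub).intervalIntegrable
    (hg.stronglyMeasurableAtFilter isOpen_Ioi s hs) (hg.continuousAt (Ioi_mem_nhds hs))
  exact (hprim.add_const _).congr_of_eventuallyEq (eventually_of_mem (Ioi_mem_nhds hs)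
    fun u hu ↦ tailIntegral_eq_intervalIntegral_add hp hu)

theorem continuousOn_tailIntegral (hp : 1 < p) : ContinuousOn (tailIntegral p r) (Ioi 0) :=
  fun _ hs ↦ (hasDerivAt_tailIntegral hp hs).continuousAt.continuousWithinAt

theorem strictAntiOn_tailIntegral (hp : 1 < p) : StrictAntiOn (tailIntegral p r) (Ioi 0) :=
  strictAntiOn_of_deriv_neg (convex_Ioi 0) (continuousOn_tailIntegral hp) fun s hs ↦ by
    rw [interior_Ioi] at hs
    rw [(hasDerivAt_tailIntegral hp hs).deriv, neg_lt_zero]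
    exact inv_rpow_add_rpow_pos hs

theorem abs_tailIntegral_sub_le (hp : 1 < p) (hrp : r < p) (hs : 0 < s) :
    |tailIntegral p r s - (s ^ (1 - p) / (p - 1) - s ^ (1 + r - 2 * p) / (2 * p - r - 1))| ≤
      s ^ (1 + 2 * r - 3 * p) / (3 * p - 2 * r - 1) := by
  have hp' : -p < -1 := by linarith
  have hr' : r - 2 * p < -1 := by linarith
  have hr'' : 2 * r - 3 * p < -1 := by linarith
  have h₁ := integrableOn_Ioi_rpow_of_lt hp' hs
  have h₂ := integrableOn_Ioi_rpow_of_lt hr' hs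
  have h₁₂ : IntegrableOn (fun t : ℝ ↦ t ^ (-p) - t ^ (r - 2 * p)) (Ioi s) := h₁.sub h₂
  have hmem : ∀ t ∈ Ioi s, (t ^ p + t ^ r)⁻¹ - (t ^ (-p) - t ^ (r - 2 * p)) ∈
      Icc 0 (t ^ (2 * r - 3 * p)) := fun t ht ↦ inv_rpow_add_rpow_sub_mem_Icc (hs.trans ht)
  have hrem : tailIntegral p r s - (s ^ (1 - p) / (p - 1) - s ^ (1 + r - 2 * p) / (2 * p - r - 1))
      = ∫ t in Ioi s, ((t ^ p + t ^ r)⁻¹ - (t ^ (-p) - t ^ (r - 2 * p))) := by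
    rw [integral_sub (integrableOn_inv_rpow_add_rpow hp hs) h₁₂, integral_sub h₁ h₂,
      integral_Ioi_rpow_of_lt hp' hs, integral_Ioi_rpow_of_lt hr' hs, tailIntegral,
      neg_div, neg_div, ← div_neg, ← div_neg]
    ring_nf
  rw [hrem, abs_of_nonneg (setIntegral_nonneg measurableSet_Ioi fun t ht ↦ (hmem t ht).1)]
  calc _ ≤ ∫ t in Ioi s, t ^ (2 * r - 3 * p) :=
        setIntegral_mono_on ((integrableOn_inv_rpow_add_rpow hp hs).sub h₁₂)
          (integrableOn_Ioi_rpow_of_lt hr'' hs) measurableSet_Ioi fun t ht ↦ (hmem t ht).2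
    _ = _ := by
      rw [integral_Ioi_rpow_of_lt hr'' hs, neg_div, ← div_neg]
      ring_nf

theorem rpow_sub_one_div_le_tailIntegral (hr : 1 < r) (hrp : r < p) (hs : 0 < s) (hs1 : s ≤ 1) :
    (s ^ (1 - r) - 1) / (2 * (r - 1)) ≤ tailIntegral p r s := by
  have hp : 1 < p := hr.trans hrp
  have hsub : uIcc s 1 ⊆ Ioi 0 := fun t ht ↦ lt_of_lt_of_le (lt_min hs one_pos) ht.1
  have hpt : ∀ t ∈ Icc s 1, t ^ (-r) / 2 ≤ (t ^ p + t ^ r)⁻¹ := fun t ht ↦ by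
    have ht0 : 0 < t := hs.trans_le ht.1
    have : t ^ p ≤ t ^ r := rpow_le_rpow_of_exponent_ge ht0 ht.2 hrp.le
    rw [rpow_neg ht0.le, div_eq_mul_inv, ← mul_inv]
    exact inv_anti₀ (by positivity) (by linarith)
  calc (s ^ (1 - r) - 1) / (2 * (r - 1)) = ∫ t in s..1, t ^ (-r) / 2 := by
        rw [intervalIntegral.integral_div, integral_rpow (Or.inr ⟨by linarith, fun h ↦
          lt_irrefl (0 : ℝ) (hsub h)⟩), one_rpow]
        have : r - 1 ≠ 0 := by linarith
        have : -r + 1 ≠ 0 := by linarith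
        field_simp
        ring_nf
    _ ≤ ∫ t in s..1, (t ^ p + t ^ r)⁻¹ :=
        intervalIntegral.integral_mono_on hs1
          ((continuousOn_id.rpow_const fun t ht ↦ Or.inl (hsub ht).ne').div_const 2
            |>.intervalIntegrable)
          (continuousOn_inv_rpow_add_rpow.mono hsub).intervalIntegrable hpt
    _ ≤ tailIntegral p r s := by
        rw [tailIntegral_eq_intervalIntegral_add hp hs]
        exact le_add_of_nonneg_right (tailIntegral_pos hp one_pos).le

theorem tendsto_tailIntegral_nhdsGT_zero (hr : 1 < r) (hrp : r < p) :
    Tendsto (tailIntegral p r) (𝓝[>] 0) atTop := by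
  have hlim : Tendsto (fun s : ℝ ↦ (s ^ (1 - r) - 1) / (2 * (r - 1))) (𝓝[>] 0) atTop :=
    (tendsto_atTop_add_const_right _ (-1)
      (tendsto_rpow_neg_nhdsGT_zero (by linarith))).atTop_div_const (by linarith)
  refine tendsto_atTop_mono' _ ?_ hlim
  filter_upwards [Ioc_mem_nhdsGT one_pos] with s hs
  exact rpow_sub_one_div_le_tailIntegral hr hrp hs.1 hs.2

noncomputable def tailIntegralRatio (p r s : ℝ) : ℝ := (p - 1) * tailIntegral p r s / s ^ (1 - p)

theorem tailIntegralRatio_pos (hp : 1 < p) (hs : 0 < s) : 0 < tailIntegralRatio p r s :=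
  div_pos (mul_pos (by linarith) (tailIntegral_pos hp hs)) (rpow_pos_of_pos hs _)

theorem tailIntegral_eq_rpow_mul_ratio (hs : 0 < s) :
    (p - 1) * tailIntegral p r s = s ^ (1 - p) * tailIntegralRatio p r s := by
  rw [tailIntegralRatio, mul_div_cancel₀ _ (rpow_pos_of_pos hs _).ne']

theorem abs_tailIntegralRatio_sub_le (hp : 1 < p) (hrp : r < p) (hs : 0 < s) :
    |tailIntegralRatio p r s - 1 + (p - 1) / (2 * p - r - 1) * s ^ (r - p)| ≤
      (p - 1) / (3 * p - 2 * r - 1) * (s ^ (r - p)) ^ 2 := by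
  have hL : 0 < s ^ (1 - p) := rpow_pos_of_pos hs _
  have e₁ : s ^ (1 + r - 2 * p) = s ^ (1 - p) * s ^ (r - p) := by
    rw [← rpow_add hs]; ring_nf
  have e₂ : s ^ (1 + 2 * r - 3 * p) = s ^ (1 - p) * (s ^ (r - p)) ^ 2 := by
    rw [← rpow_mul_natCast hs.le, ← rpow_add hs]; ring_nf
  have hp₁ : p - 1 ≠ 0 := by linarith
  have hp₂ : 2 * p - r - 1 ≠ 0 := by linarith
  have hid : tailIntegralRatio p r s - 1 + (p - 1) / (2 * p - r - 1) * s ^ (r - p) =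
      (p - 1) / s ^ (1 - p) *
        (tailIntegral p r s - (s ^ (1 - p) / (p - 1) - s ^ (1 + r - 2 * p) / (2 * p - r - 1))) := by
    rw [tailIntegralRatio, e₁]
    field_simp
    ring
  rw [hid, abs_mul, abs_of_pos (div_pos (by linarith) hL)]
  calc _ ≤ (p - 1) / s ^ (1 - p) * (s ^ (1 + 2 * r - 3 * p) / (3 * p - 2 * r - 1)) :=
        mul_le_mul_of_nonneg_left (abs_tailIntegral_sub_le hp hrp hs) (by positivity)
    _ = _ := by rw [e₂]; field_simp

theorem tendsto_rpow_sub_atTop (hrp : r < p) : Tendsto (fun s : ℝ ↦ s ^ (r - p)) atTop (𝓝 0) := by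
  simpa only [neg_sub] using tendsto_rpow_neg_atTop (sub_pos.2 hrp)

theorem tailIntegralRatio_sub_one_add_isBigO (hp : 1 < p) (hrp : r < p) :
    (fun s ↦ tailIntegralRatio p r s - 1 + (p - 1) / (2 * p - r - 1) * s ^ (r - p))
      =O[atTop] fun s ↦ (s ^ (r - p)) ^ 2 := by
  refine IsBigO.of_bound ((p - 1) / (3 * p - 2 * r - 1)) ?_
  filter_upwards [eventually_gt_atTop 0] with s hs
  rw [Real.norm_eq_abs, norm_of_nonneg (by positivity)]
  exact abs_tailIntegralRatio_sub_le hp hrp hs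

theorem tailIntegralRatio_sub_one_isBigO (hp : 1 < p) (hrp : r < p) :
    (fun s ↦ tailIntegralRatio p r s - 1) =O[atTop] fun s ↦ s ^ (r - p) := by
  have hsq : (fun s : ℝ ↦ (s ^ (r - p)) ^ 2) =O[atTop] fun s ↦ s ^ (r - p) := by
    simpa only [sq, mul_one] using
      (isBigO_refl (fun s : ℝ ↦ s ^ (r - p)) atTop).mul ((tendsto_rpow_sub_atTop hrp).isBigO_one ℝ)
  have hlin : (fun s : ℝ ↦ (p - 1) / (2 * p - r - 1) * s ^ (r - p)) =O[atTop]
      fun s ↦ s ^ (r - p) := (isBigO_refl _ _).const_mul_left _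
  simpa using ((tailIntegralRatio_sub_one_add_isBigO hp hrp).trans hsq).sub hlin

theorem tendsto_tailIntegralRatio (hp : 1 < p) (hrp : r < p) :
    Tendsto (tailIntegralRatio p r) atTop (𝓝 1) :=
  tendsto_sub_nhds_zero_iff.1 <|
    (tailIntegralRatio_sub_one_isBigO hp hrp).trans_tendsto (tendsto_rpow_sub_atTop hrp)

theorem tendsto_tailIntegral_atTop (hp : 1 < p) (hrp : r < p) :
    Tendsto (tailIntegral p r) atTop (𝓝 0) := by
  have hL : Tendsto (fun s : ℝ ↦ s ^ (1 - p)) atTop (𝓝 0) := by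
    simpa only [neg_sub] using tendsto_rpow_neg_atTop (sub_pos.2 hp)
  have := (hL.mul (tendsto_tailIntegralRatio hp hrp)).div_const (p - 1)
  rw [zero_mul, zero_div] at this
  refine this.congr' ?_
  filter_upwards [eventually_gt_atTop 0] with s hs
  rw [← tailIntegral_eq_rpow_mul_ratio hs, mul_div_cancel_left₀ _ (by linarith)]

theorem tailIntegral_inverse_remainder_isBigO (hp : 1 < p) (hrp : r < p) :
    (fun s ↦ s - ((p - 1) * tailIntegral p r s) ^ (-(1 / (p - 1)))
        + (1 / (2 * p - r - 1)) * ((p - 1) * tailIntegral p r s) ^ ((p - r - 1) / (p - 1)))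
      =O[atTop] fun s ↦ s * (s ^ (r - p)) ^ 2 := by
  -- With `w` the ratio and `x = s ^ (r - p)` we have `(p - 1) F(s) = s ^ (1 - p) w`, and the
  -- remainder splits into three terms, each `O(s x²)`, by the second and first order Taylor
  -- expansions of `w ^ q` at `w = 1` and the two-term expansion of `F`.
  set w := tailIntegralRatio p r
  set x : ℝ → ℝ := fun s ↦ s ^ (r - p)
  set a := 1 / (2 * p - r - 1)
  set q := -(1 / (p - 1))
  have hw := tailIntegralRatio_sub_one_isBigO hp hrp
  have hw₂ := tailIntegralRatio_sub_one_add_isBigO hp hrp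
  have hT₂ : (fun s ↦ w s ^ q - 1 - q * (w s - 1)) =O[atTop] fun s ↦ x s ^ 2 :=
    ((rpow_sub_one_sub_mul_isBigO q).comp_tendsto (tendsto_tailIntegralRatio hp hrp)).trans
      (hw.pow 2)
  have hT₁ : (fun s ↦ w s ^ ((p - r - 1) / (p - 1)) - 1) =O[atTop] x :=
    ((rpow_sub_one_isBigO _).comp_tendsto (tendsto_tailIntegralRatio hp hrp)).trans hw
  have hsum := (((isBigO_refl (fun s : ℝ ↦ s) atTop).mul hT₂).neg_left.add
    (((isBigO_refl (fun s : ℝ ↦ s) atTop).mul hw₂).const_mul_left (1 / (p - 1)))).add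
    ((((isBigO_refl (fun s ↦ s * x s) atTop).mul hT₁).const_mul_left a).congr_right
      fun s ↦ by ring)
  refine hsum.congr' ?_ EventuallyEq.rfl
  filter_upwards [eventually_gt_atTop 0] with s hs
  have hp₁ : p - 1 ≠ 0 := by linarith
  have hL := rpow_nonneg hs.le (1 - p)
  have hw₀ := (tailIntegralRatio_pos (r := r) hp hs).le
  simp only [w, x, a, q]
  rw [tailIntegral_eq_rpow_mul_ratio hs, mul_rpow hL hw₀, mul_rpow hL hw₀,
    rpow_rpow_eq_mul_rpow_pow (c := r - p) hs 0 (by push_cast; field_simp; ring),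
    rpow_rpow_eq_mul_rpow_pow (c := r - p) hs 1 (by push_cast; field_simp; ring)]
  field_simp
  ring

theorem mul_rpow_sub_sq_isBigO_tailIntegral_rpow (hp : 1 < p) (hrp : r < p) :
    (fun s ↦ s * (s ^ (r - p)) ^ 2) =O[atTop]
      fun s ↦ tailIntegral p r s ^ ((2 * (p - r) - 1) / (p - 1)) := by
  set β := (2 * (p - r) - 1) / (p - 1)
  have hp₁ : 0 < p - 1 := by linarith
  have hlim : Tendsto (fun s ↦ ((tailIntegralRatio p r s / (p - 1)) ^ β)⁻¹) atTop
      (𝓝 (((1 / (p - 1)) ^ β)⁻¹)) :=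
    (((tendsto_tailIntegralRatio hp hrp).div_const _).rpow_const
      (Or.inl (by positivity))).inv₀ (by positivity)
  refine ((isBigO_refl (fun s ↦ tailIntegral p r s ^ β) atTop).mul
    (hlim.isBigO_one ℝ)).congr' ?_ (by simp)
  filter_upwards [eventually_gt_atTop 0] with s hs
  have hF : tailIntegral p r s = s ^ (1 - p) * (tailIntegralRatio p r s / (p - 1)) := by
    rw [mul_div_assoc', ← tailIntegral_eq_rpow_mul_ratio hs, mul_div_cancel_left₀ _ hp₁.ne']
  have hw : 0 < tailIntegralRatio p r s / (p - 1) := div_pos (tailIntegralRatio_pos hp hs) hp₁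
  rw [hF, mul_rpow (rpow_nonneg hs.le _) hw.le,
    rpow_rpow_eq_mul_rpow_pow (c := r - p) hs 2 (by simp only [β]; push_cast; field_simp; ring),
    mul_inv_cancel_right₀ (rpow_pos_of_pos hw _).ne']

theorem bijOn_tailIntegral (hr : 1 < r) (hrp : r < p) :
    BijOn (tailIntegral p r) (Ioi 0) (Ioi 0) := by
  have hp : 1 < p := hr.trans hrp
  refine ⟨fun s hs ↦ tailIntegral_pos hp hs, (strictAntiOn_tailIntegral hp).injOn,
    fun y (hy : 0 < y) ↦ ?_⟩
  obtain ⟨a, hya, ha⟩ := (((tendsto_tailIntegral_nhdsGT_zero hr hrp).eventually_ge_atTop y).and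
    self_mem_nhdsWithin).exists
  obtain ⟨b, hby, hb⟩ := (((tendsto_tailIntegral_atTop hp hrp).eventually (gt_mem_nhds hy)).and
    (eventually_gt_atTop 0)).exists
  exact (continuousOn_tailIntegral hp).surjOn_Icc hb ha ⟨hby.le, hya⟩

end TailIntegral

theorem tendsto_invFunOn_nhdsGT_zero {F : ℝ → ℝ} (hF : StrictAntiOn F (Ioi 0))
    (hbij : BijOn F (Ioi 0) (Ioi 0)) :
    Tendsto (Function.invFunOn F (Ioi 0)) (𝓝[>] 0) atTop := by
  refine tendsto_atTop.2 fun M ↦ ?_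
  have hM : 0 < max M 1 := lt_max_of_lt_right one_pos
  filter_upwards [Ioo_mem_nhdsGT (hbij.mapsTo hM)] with σ hσ
  have hG := hbij.surjOn.mapsTo_invFunOn hσ.1
  refine (le_max_left M 1).trans (not_lt.1 fun h ↦ ?_)
  have := hF hG hM h
  rw [hbij.invOn_invFunOn.2 hσ.1] at this
  exact lt_asymm hσ.2 this

/-- for `p > 1`, `1 < r < p`, the function
`F(s) = ∫_s^∞ dt/(t^p + t^r)` is a strictly decreasing continuous bijection
from `(0,∞)` onto `(0,∞)`, and its inverse `F⁻¹` satisfies, as `σ → 0+`,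
`F⁻¹(σ) = ((p−1)σ)^{−1/(p−1)} − (1/(2p−r−1))((p−1)σ)^{(p−r−1)/(p−1)}
  + O(σ^{(2(p−r)−1)/(p−1)})`. -/
theorem Finv_expansion (p r : ℝ) (hp : 1 < p) (hr : 1 < r) (hrp : r < p)
    (F : ℝ → ℝ)
    (hF : ∀ s : ℝ, F s = ∫ t in Set.Ioi s, (t ^ p + t ^ r)⁻¹) :
    StrictAntiOn F (Set.Ioi 0) ∧
    ContinuousOn F (Set.Ioi 0) ∧
    Set.BijOn F (Set.Ioi 0) (Set.Ioi 0) ∧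
    ∃ C : ℝ, 0 < C ∧ ∀ᶠ σ in nhdsWithin 0 (Set.Ioi 0),
      |Function.invFunOn F (Set.Ioi 0) σ - ((p - 1) * σ) ^ (-(1 / (p - 1)))
          + (1 / (2 * p - r - 1)) * ((p - 1) * σ) ^ ((p - r - 1) / (p - 1))| ≤
        C * σ ^ ((2 * (p - r) - 1) / (p - 1)) := by
  obtain rfl : F = tailIntegral p r := funext hF
  have hbij := bijOn_tailIntegral hr hrp
  refine ⟨strictAntiOn_tailIntegral hp, continuousOn_tailIntegral hp, hbij, ?_⟩
  have hexp := (tailIntegral_inverse_remainder_isBigO hp hrp).trans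
    (mul_rpow_sub_sq_isBigO_tailIntegral_rpow hp hrp)
  have hG := tendsto_invFunOn_nhdsGT_zero (strictAntiOn_tailIntegral hp) hbij
  obtain ⟨C, hC, hO⟩ := (hexp.comp_tendsto hG).exists_pos
  refine ⟨C, hC, ?_⟩
  filter_upwards [hO.bound, self_mem_nhdsWithin] with σ hσ (hσ₀ : 0 < σ)
  rwa [Function.comp_apply, Function.comp_apply, hbij.invOn_invFunOn.2 hσ₀, Real.norm_eq_abs,
    Real.norm_eq_abs, abs_of_pos (rpow_pos_of_pos hσ₀ _)] at hσ
end
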